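/- Define G on the prism P = {(s,t,u) ∈ [0,1]³ : s+t ≤ 1} by G(s,t,u) = (s,t,u) if s+t+u ≤ 1; G(s,t,u) = (s, 1−u, 1−s−t) if s+t+u > 1 and t+u > 1; G(s,t,u) = (1−t−u, t, s+t+u−1) if s+t+u > 1 and t+u ≤ 1. Then G maps P onto the simplex S = {(s,t,u) : s,t,u ≥ 0, s+t+u ≤ 1}, and the pushforward under G of the uniform measure on P is the uniform measure on S. -/

import Mathlib

/-!
The three branches of `G` are affine maps of determinant `±1`: the second is a reflection of the
`(t, u)`-plane followed by a shear, the third a composition of two shears, so both preserve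
Lebesgue measure. The planes `s + t + u = 1` and `t + u = 1` cut the prism into three pieces, and
each branch maps its piece onto the simplex, bijectively up to a face of measure zero. Hence `G`
pushes Lebesgue measure on the prism forward to three times Lebesgue measure on the simplex; in
particular `vol P = 3 vol S`, so the normalizations agree.
-/

open MeasureTheory Set
open scoped ENNReal

section Shear

variable {α G : Type*} [MeasurableSpace α] [MeasurableSpace G] [Add G] [MeasurableAdd₂ G]
  {μ : Measure α} {ν : Measure G} [SFinite μ] [SFinite ν] [ν.IsAddRightInvariant]

theorem measurePreserving_prodMk_add {f : α → G} (hf : Measurable f) :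
    MeasurePreserving (fun p : α × G => (p.1, p.2 + f p.1)) (μ.prod ν) (μ.prod ν) :=
  (MeasurePreserving.id μ).skew_product (by fun_prop)
    (.of_forall fun a => map_add_right_eq_self ν (f a))

theorem measurePreserving_add_prodMk {f : α → G} (hf : Measurable f) :
    MeasurePreserving (fun p : G × α => (p.1 + f p.2, p.2)) (ν.prod μ) (ν.prod μ) :=
  (Measure.measurePreserving_swap.comp (measurePreserving_prodMk_add hf)).comp
    Measure.measurePreserving_swap

end Shear

theorem measurePreserving_shear_thd {f : ℝ × ℝ → ℝ} (hf : Measurable f) :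
    MeasurePreserving (fun p : ℝ × ℝ × ℝ => (p.1, p.2.1, p.2.2 + f (p.1, p.2.1))) :=
  (MeasurePreserving.id volume).skew_product
    (g := fun (s : ℝ) (q : ℝ × ℝ) => (q.1, q.2 + f (s, q.1)))
    (by fun_prop) (.of_forall fun s => (measurePreserving_prodMk_add (f := fun t => f (s, t))
      (by fun_prop)).map_eq)

theorem volume_graph_eq_zero (f : ℝ × ℝ → ℝ) (hf : Measurable f) :
    volume {p : ℝ × ℝ × ℝ | p.2.2 = f (p.1, p.2.1)} = 0 := by
  have hplane : volume {p : ℝ × ℝ × ℝ | p.2.2 = 0} = 0 := by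
    rw [show {p : ℝ × ℝ × ℝ | p.2.2 = 0} = univ ×ˢ univ ×ˢ {0} by ext; simp,
      Measure.volume_eq_prod, Measure.prod_prod, Measure.volume_eq_prod, Measure.prod_prod]
    simp
  rw [← (measurePreserving_shear_thd (f := fun q => -f q) (by fun_prop)).measure_preimage
    (by measurability)] at hplane
  simpa only [preimage_ofPred_eq, add_neg_eq_zero] using hplane

theorem MeasureTheory.MeasurePreserving.map_restrict_preimage_of_eqOn {α β : Type*}
    [MeasurableSpace α] [MeasurableSpace β] {μ : Measure α} {ν : Measure β} {f g : α → β}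
    (hg : MeasurePreserving g μ ν) {s : Set β} (hs : MeasurableSet s)
    (hfg : EqOn f g (g ⁻¹' s)) : (μ.restrict (g ⁻¹' s)).map f = ν.restrict s := by
  rw [Measure.map_congr ((ae_restrict_mem (hg.measurable hs)).mono hfg),
    (hg.restrict_preimage hs).map_eq]

theorem MeasureTheory.Measure.map_smul_inv_measure_univ {α β : Type*} [MeasurableSpace α]
    [MeasurableSpace β] {μ : Measure α} {ν : Measure β} {f : α → β} (hf : Measurable f)
    {c : ℝ≥0∞} (hc₀ : c ≠ 0) (hc : c ≠ ∞) (h : μ.map f = c • ν) :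
    ((μ univ)⁻¹ • μ).map f = (ν univ)⁻¹ • ν := by
  have hμ : μ univ = c * ν univ := by
    rw [← preimage_univ (f := f), ← Measure.map_apply hf .univ, h, Measure.smul_apply, smul_eq_mul]
  rw [Measure.map_smul, h, smul_smul, hμ, ENNReal.mul_inv (.inl hc₀) (.inl hc), mul_comm c⁻¹,
    mul_assoc, ENNReal.inv_mul_cancel hc₀ hc, mul_one]

def prism : Set (ℝ × ℝ × ℝ) := {p ∈ Icc 0 1 | p.1 + p.2.1 ≤ 1}

def simplex : Set (ℝ × ℝ × ℝ) := {p | 0 ≤ p.1 ∧ 0 ≤ p.2.1 ∧ 0 ≤ p.2.2 ∧ p.1 + p.2.1 + p.2.2 ≤ 1}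

noncomputable def fold₂ (p : ℝ × ℝ × ℝ) : ℝ × ℝ × ℝ := (p.1, 1 - p.2.2, 1 - p.1 - p.2.1)

noncomputable def fold₃ (p : ℝ × ℝ × ℝ) : ℝ × ℝ × ℝ :=
  (1 - p.2.1 - p.2.2, p.2.1, p.1 + p.2.1 + p.2.2 - 1)

noncomputable def fold (p : ℝ × ℝ × ℝ) : ℝ × ℝ × ℝ :=
  if p.1 + p.2.1 + p.2.2 ≤ 1 then p else if 1 < p.2.1 + p.2.2 then fold₂ p else fold₃ p

theorem measurePreserving_fold₂ : MeasurePreserving fold₂ := by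
  have hreflect : MeasurePreserving (fun v : ℝ × ℝ => (1 - v.2, 1 - v.1)) :=
    (Measure.measurePreserving_sub_left volume ((1, 1) : ℝ × ℝ)).comp
      Measure.measurePreserving_swap
  convert (measurePreserving_shear_thd (f := fun q => -q.1) (by fun_prop)).comp
    ((MeasurePreserving.id volume).prod hreflect) using 1
  · ext p <;> simp only [fold₂, Function.comp_apply, Prod.map_fst, Prod.map_snd, id_eq]
    ring
  · exact Measure.volume_eq_prod _ _

theorem measurePreserving_fold₃ : MeasurePreserving fold₃ := by
  convert (measurePreserving_add_prodMk (μ := volume) (ν := volume)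
    (f := fun q : ℝ × ℝ => -q.2) (by fun_prop)).comp
    (measurePreserving_shear_thd (f := fun q => q.1 + q.2 - 1) (by fun_prop)) using 1
  · ext p <;> simp only [fold₃, Function.comp_apply] <;> ring
  · exact Measure.volume_eq_prod _ _

theorem measurable_fold : Measurable fold := by
  unfold fold
  exact .ite (measurableSet_le (by fun_prop) measurable_const) measurable_id
    (.ite (measurableSet_lt measurable_const (by fun_prop)) measurePreserving_fold₂.measurable
      measurePreserving_fold₃.measurable)

theorem measurableSet_simplex : MeasurableSet simplex := by
  unfold simplex
  measurability

theorem inter_compl_graph_ae_eq (s : Set (ℝ × ℝ × ℝ)) (f : ℝ × ℝ → ℝ)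
    (hf : Measurable f) : (s ∩ {p | p.2.2 ≠ f (p.1, p.2.1)} : Set _) =ᵐ[volume] s :=
  inter_ae_eq_left_of_ae_eq_univ <| ae_eq_univ.2 <| by
    simpa only [ne_eq, compl_ofPred, not_not] using volume_graph_eq_zero f hf

theorem prism_inter_eq_simplex : prism ∩ {p | p.1 + p.2.1 + p.2.2 ≤ 1} = simplex := by
  ext ⟨s, t, u⟩
  simp only [prism, simplex, mem_inter_iff, mem_ofPred_eq, mem_Icc, Prod.le_def, Prod.fst_zero,
    Prod.snd_zero, Prod.fst_one, Prod.snd_one]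
  grind

theorem prism_diff_inter_eq_preimage_fold₂ :
    (prism \ {p | p.1 + p.2.1 + p.2.2 ≤ 1}) ∩ {p | 1 < p.2.1 + p.2.2} =
      fold₂ ⁻¹' (simplex ∩ {p | p.2.2 ≠ 1 - p.1 - p.2.1}) := by
  ext ⟨s, t, u⟩
  simp only [prism, simplex, fold₂, mem_inter_iff, mem_sdiff, mem_preimage, mem_ofPred_eq, mem_Icc,
    Prod.le_def, Prod.fst_zero, Prod.snd_zero, Prod.fst_one, Prod.snd_one]
  grind

theorem prism_diff_diff_eq_preimage_fold₃ :
    (prism \ {p | p.1 + p.2.1 + p.2.2 ≤ 1}) \ {p | 1 < p.2.1 + p.2.2} =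
      fold₃ ⁻¹' (simplex ∩ {p | p.2.2 ≠ 0}) := by
  ext ⟨s, t, u⟩
  simp only [prism, simplex, fold₃, mem_inter_iff, mem_sdiff, mem_preimage, mem_ofPred_eq, mem_Icc,
    Prod.le_def, Prod.fst_zero, Prod.snd_zero, Prod.fst_one, Prod.snd_one]
  grind

theorem eqOn_fold_id : EqOn fold id simplex := fun _ hp => if_pos hp.2.2.2

theorem eqOn_fold_fold₂ :
    EqOn fold fold₂ ((prism \ {p | p.1 + p.2.1 + p.2.2 ≤ 1}) ∩ {p | 1 < p.2.1 + p.2.2}) :=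
  fun _ ⟨⟨_, h₁⟩, h₂⟩ => (if_neg h₁).trans (if_pos h₂)

theorem eqOn_fold_fold₃ :
    EqOn fold fold₃ ((prism \ {p | p.1 + p.2.1 + p.2.2 ≤ 1}) \ {p | 1 < p.2.1 + p.2.2}) :=
  fun _ ⟨⟨_, h₁⟩, h₂⟩ => (if_neg h₁).trans (if_neg h₂)

theorem image_fold_prism : fold '' prism = simplex := by
  refine Subset.antisymm ?_ ?_
  · rw [← inter_union_sdiff prism {p | p.1 + p.2.1 + p.2.2 ≤ 1}, image_union,
      prism_inter_eq_simplex, eqOn_fold_id.image_eq_self, ← inter_union_sdiff (prism \ _)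
      {p | 1 < p.2.1 + p.2.2}, image_union, eqOn_fold_fold₂.image_eq, eqOn_fold_fold₃.image_eq,
      prism_diff_inter_eq_preimage_fold₂, prism_diff_diff_eq_preimage_fold₃]
    exact union_subset subset_rfl (union_subset
      ((image_preimage_subset _ _).trans inter_subset_left)
      ((image_preimage_subset _ _).trans inter_subset_left))
  · calc simplex = fold '' simplex := eqOn_fold_id.image_eq_self.symm
      _ ⊆ fold '' prism := image_mono (prism_inter_eq_simplex ▸ inter_subset_left)

theorem map_fold_restrict_prism :
    (volume.restrict prism).map fold = (3 : ℝ≥0∞) • volume.restrict simplex := by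
  have h₁ : (volume.restrict (prism ∩ {p | p.1 + p.2.1 + p.2.2 ≤ 1})).map fold =
      volume.restrict simplex := by
    rw [prism_inter_eq_simplex, ← preimage_id (s := simplex)]
    exact (MeasurePreserving.id volume).map_restrict_preimage_of_eqOn measurableSet_simplex
      eqOn_fold_id
  have h₂ : (volume.restrict ((prism \ {p | p.1 + p.2.1 + p.2.2 ≤ 1}) ∩
      {p | 1 < p.2.1 + p.2.2})).map fold = volume.restrict simplex := by
    rw [prism_diff_inter_eq_preimage_fold₂, measurePreserving_fold₂.map_restrict_preimage_of_eqOn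
      (measurableSet_simplex.inter (by measurability))
      (prism_diff_inter_eq_preimage_fold₂ ▸ eqOn_fold_fold₂)]
    exact Measure.restrict_congr_set
      (inter_compl_graph_ae_eq _ (fun q => 1 - q.1 - q.2) (by fun_prop))
  have h₃ : (volume.restrict ((prism \ {p | p.1 + p.2.1 + p.2.2 ≤ 1}) \
      {p | 1 < p.2.1 + p.2.2})).map fold = volume.restrict simplex := by
    rw [prism_diff_diff_eq_preimage_fold₃, measurePreserving_fold₃.map_restrict_preimage_of_eqOn
      (measurableSet_simplex.inter (by measurability))
      (prism_diff_diff_eq_preimage_fold₃ ▸ eqOn_fold_fold₃)]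
    exact Measure.restrict_congr_set
      (inter_compl_graph_ae_eq _ (fun _ => 0) measurable_const)
  rw [← Measure.restrict_inter_add_sdiff prism (t := {p | p.1 + p.2.1 + p.2.2 ≤ 1})
      (by measurability),
    ← Measure.restrict_inter_add_sdiff (prism \ _) (t := {p | 1 < p.2.1 + p.2.2})
      (by measurability),
    Measure.map_add _ _ measurable_fold, Measure.map_add _ _ measurable_fold, h₁, h₂, h₃]
  rw [show (3 : ℝ≥0∞) = 1 + 1 + 1 by norm_num, add_smul, add_smul, one_smul, add_assoc]

/-- The second fold map sends the prism `{s + t ≤ 1}` onto the simplex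
`{s,t,u ≥ 0, s + t + u ≤ 1}`, pushing the uniform measure on the prism forward to
the uniform measure on the simplex. -/
theorem stmt_18 (G : ℝ × ℝ × ℝ → ℝ × ℝ × ℝ)
    (hG : G = fun p =>
      if p.1 + p.2.1 + p.2.2 ≤ 1 then p
      else if 1 < p.2.1 + p.2.2 then (p.1, 1 - p.2.2, 1 - p.1 - p.2.1)
      else (1 - p.2.1 - p.2.2, p.2.1, p.1 + p.2.1 + p.2.2 - 1))
    (P S : Set (ℝ × ℝ × ℝ))
    (hP : P = {p ∈ Set.Icc (0 : ℝ × ℝ × ℝ) 1 | p.1 + p.2.1 ≤ 1})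
    (hS : S = {p : ℝ × ℝ × ℝ |
      0 ≤ p.1 ∧ 0 ≤ p.2.1 ∧ 0 ≤ p.2.2 ∧ p.1 + p.2.1 + p.2.2 ≤ 1}) :
    G '' P = S ∧
    Measure.map G ((volume P)⁻¹ • volume.restrict P) =
      (volume S)⁻¹ • volume.restrict S := by
  obtain rfl : G = fold := hG
  obtain rfl : P = prism := hP
  obtain rfl : S = simplex := hS
  refine ⟨image_fold_prism, ?_⟩
  simpa only [Measure.restrict_apply_univ] using
    Measure.map_smul_inv_measure_univ measurable_fold (by norm_num) (by norm_num)
      map_fold_restrict_prism
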